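/- arXiv:2407.00971 — 3 statements merged into one kernel-verified Lean document; each statement's English description precedes it below -/
import Mathlib

section
/- Let ν be a Young diagram, let x = (c,r) be a removable corner of ν (i.e. x ∈ ν and μ := ν \ {x} is again a Young diagram), let R be the set of cells (a,r) ∈ ν with a < c (the cells of ν in the same row as x) and C the set of cells (c,b) ∈ ν with b < r (the cells of ν in the same column as x). Then in ℚ(q,t) one has (1−qt) · ∏_{y∈R} (1−q^{1+a_ν(y)} t^{−l_ν(y)})/(1−q^{1+a_μ(y)} t^{−l_μ(y)}) · ∏_{y∈C} (1−q^{−a_ν(y)} t^{l_ν(y)+1})/(1−q^{−a_μ(y)} t^{l_μ(y)+1}) = Ω⁰( q^{c+1} t^{r+1} − (1−q)(1−t)·Σ_{(a,b)∈μ} q^{c−a} t^{r−b} ). -/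
open scoped Classical

noncomputable section

/-- The field `ℚ(q,t)` of rational functions in two variables over `ℚ`. -/
abbrev K : Type := FractionRing (MvPolynomial (Fin 2) ℚ)

def q : K := algebraMap (MvPolynomial (Fin 2) ℚ) K (MvPolynomial.X 0)
def t : K := algebraMap (MvPolynomial (Fin 2) ℚ) K (MvPolynomial.X 1)

/-- The Laurent monomial `q^i t^j` with integer exponents. -/
def monK (i j : ℤ) : K := q ^ i * t ^ j

/-- `Ω⁰` of a Laurent polynomial, given by its (finitely supported) coefficient
function `P : ℤ × ℤ →₀ ℤ`: the product `∏_{(i,j) ≠ (0,0)} (1 - q^i t^j)^{c_{ij}}`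
(the constant coefficient is ignored). -/
def Omega0 (P : (ℤ × ℤ) →₀ ℤ) : K :=
  ∏ p ∈ P.support.erase (0, 0), (1 - monK p.1 p.2) ^ P p

/-- The coefficient function of the Laurent monomial `q^i t^j`. -/
def lmono (i j : ℤ) : (ℤ × ℤ) →₀ ℤ := Finsupp.single (i, j) 1

/-- The coefficient function of the Laurent polynomial `(1-q)(1-t) · q^u t^v`. -/
def quadr (u v : ℤ) : (ℤ × ℤ) →₀ ℤ :=
  lmono u v - lmono (u + 1) v - lmono u (v + 1) + lmono (u + 1) (v + 1)

/-- A Young diagram: a finite set of cells in `ℕ × ℕ` closed under decreasing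
either coordinate. -/
def IsYoung (μ : Finset (ℕ × ℕ)) : Prop :=
  ∀ a b a' b', (a, b) ∈ μ → a' ≤ a → b' ≤ b → (a', b') ∈ μ

/-- The arm of the cell `x` in `μ`: cells of `μ` in the same row strictly to the right. -/
def arm (μ : Finset (ℕ × ℕ)) (x : ℕ × ℕ) : ℕ :=
  (μ.filter fun y => y.2 = x.2 ∧ x.1 < y.1).card

/-- The leg of the cell `x` in `μ`: cells of `μ` in the same column strictly above. -/
def leg (μ : Finset (ℕ × ℕ)) (x : ℕ × ℕ) : ℕ :=
  (μ.filter fun y => y.1 = x.1 ∧ x.2 < y.2).card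

/-- `g_μ = ∏_{x∈μ} (1 - q^{a(x)+1} t^{-l(x)}) (1 - q^{-a(x)} t^{l(x)+1})`. -/
def gPoly (μ : Finset (ℕ × ℕ)) : K :=
  ∏ x ∈ μ,
    ((1 - monK ((arm μ x : ℤ) + 1) (-(leg μ x : ℤ))) *
      (1 - monK (-(arm μ x : ℤ)) ((leg μ x : ℤ) + 1)))

/-!
Both sides are products of factors `1 - q^i t^j`, and `Omega0` turns sums of coefficient
functions into products, so it suffices to prove an identity of Laurent polynomials. The term
`(1 - q)(1 - t) q^u t^v` is a mixed second difference, so the sum over `μ` telescopes: summed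
column by column over the columns `a ≤ c`, and row by row over the cells to the right of
column `c` (which all lie below row `r`, since `(c + 1, r) ∉ ν`), it leaves only boundary terms.
These are `q t`, one pair of monomials for each cell of the row of `x`, read off the column
heights, and one pair for each cell of the column of `x`, read off the row lengths. They are the
arm-leg ratios of the statement, because removing `x` shortens the arms of the cells of `R` and
the legs of the cells of `C` by one and changes no other arm or leg.
-/

open Finset MvPolynomial

lemma q_ne_zero : q ≠ 0 :=
  (map_ne_zero_iff _ (IsFractionRing.injective (MvPolynomial (Fin 2) ℚ) K)).mpr (X_ne_zero 0)

lemma t_ne_zero : t ≠ 0 :=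
  (map_ne_zero_iff _ (IsFractionRing.injective (MvPolynomial (Fin 2) ℚ) K)).mpr (X_ne_zero 1)

lemma q_pow_mul_t_pow_inj {a b a' b' : ℕ} (h : q ^ a * t ^ b = q ^ a' * t ^ b') :
    a = a' ∧ b = b' := by
  have hX : (X 0 ^ a * X 1 ^ b : MvPolynomial (Fin 2) ℚ) = X 0 ^ a' * X 1 ^ b' :=
    IsFractionRing.injective _ K (by simpa [q, t] using h)
  simp only [X_pow_eq_monomial, monomial_mul, one_mul] at hX
  have hs := monomial_left_injective one_ne_zero hX
  exact ⟨by simpa using congr($hs 0), by simpa using congr($hs 1)⟩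

lemma monK_eq_one {i j : ℤ} (h : monK i j = 1) : i = 0 ∧ j = 0 := by
  rw [monK, ← Int.toNat_sub_toNat_neg i, ← Int.toNat_sub_toNat_neg j,
    zpow_sub₀ q_ne_zero, zpow_sub₀ t_ne_zero] at h
  rw [div_mul_div_comm,
    div_eq_one_iff_eq (mul_ne_zero (zpow_ne_zero _ q_ne_zero) (zpow_ne_zero _ t_ne_zero)),
    zpow_natCast, zpow_natCast, zpow_natCast, zpow_natCast] at h
  have := q_pow_mul_t_pow_inj h
  omega

lemma one_sub_monK_ne_zero {p : ℤ × ℤ} (hp : p ≠ (0, 0)) : 1 - monK p.1 p.2 ≠ 0 := fun h =>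
  hp (Prod.ext_iff.mpr (monK_eq_one (sub_eq_zero.mp h).symm))

lemma Omega0_eq_prod_erase (P : (ℤ × ℤ) →₀ ℤ) :
    Omega0 P = (P.erase (0, 0)).prod fun p n => (1 - monK p.1 p.2) ^ n := by
  rw [Omega0, Finsupp.prod, Finsupp.support_erase]
  exact prod_congr rfl fun p hp => by rw [Finsupp.erase_ne (ne_of_mem_erase hp)]

lemma Omega0_add (P Q : (ℤ × ℤ) →₀ ℤ) : Omega0 (P + Q) = Omega0 P * Omega0 Q := by
  simp only [Omega0_eq_prod_erase, Finsupp.erase_add]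
  refine Finsupp.prod_add_index (fun _ _ => zpow_zero _) fun p hp m n =>
    zpow_add₀ (one_sub_monK_ne_zero ?_) m n
  rw [mem_union, Finsupp.support_erase, Finsupp.support_erase] at hp
  exact hp.elim ne_of_mem_erase ne_of_mem_erase

lemma Omega0_ne_zero (P : (ℤ × ℤ) →₀ ℤ) : Omega0 P ≠ 0 :=
  prod_ne_zero_iff.mpr fun _ hp => zpow_ne_zero _ (one_sub_monK_ne_zero (ne_of_mem_erase hp))

lemma Omega0_sub (P Q : (ℤ × ℤ) →₀ ℤ) : Omega0 (P - Q) = Omega0 P / Omega0 Q := by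
  rw [eq_div_iff (Omega0_ne_zero Q), ← Omega0_add, sub_add_cancel]

lemma Omega0_sum {ι : Type*} (s : Finset ι) (P : ι → (ℤ × ℤ) →₀ ℤ) :
    Omega0 (∑ i ∈ s, P i) = ∏ i ∈ s, Omega0 (P i) := by
  induction s using Finset.induction_on with
  | empty => simp [Omega0]
  | insert i s hi ih => rw [sum_insert hi, prod_insert hi, Omega0_add, ih]

lemma Omega0_lmono {i j : ℤ} (h : (i, j) ≠ (0, 0)) : Omega0 (lmono i j) = 1 - monK i j := by
  rw [Omega0, lmono, Finsupp.support_single _ one_ne_zero,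
    erase_eq_of_notMem (by simpa [eq_comm] using h)]
  simp

lemma Omega0_lmono_sub_lmono {i j i' j' : ℤ} (h : (i, j) ≠ (0, 0)) (h' : (i', j') ≠ (0, 0)) :
    Omega0 (lmono i j - lmono i' j') = (1 - monK i j) / (1 - monK i' j') := by
  rw [Omega0_sub, Omega0_lmono h, Omega0_lmono h']

theorem YoungDiagram.sum_cells_eq_sum_rows_add_sum_cols {M : Type*} [AddCommMonoid M]
    (μ : YoungDiagram) {c r : ℕ} (h : (c + 1, r) ∉ μ) (f : ℕ × ℕ → M) :
    ∑ x ∈ μ.cells, f x = ∑ i ∈ range (c + 1), ∑ j ∈ range (μ.rowLen i), f (i, j) +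
      ∑ j ∈ range r, ∑ i ∈ Ico (c + 1) (μ.colLen j), f (i, j) := by
  rw [← sum_filter_add_sum_filter_not μ.cells (fun x => x.1 ≤ c)]
  congr 1
  · refine sum_finset_product _ _ _ fun x => ?_
    rw [mem_filter, mem_cells, mem_range, mem_range, ← mem_iff_lt_rowLen]
    exact ⟨fun hx => ⟨by omega, hx.1⟩, fun hx => ⟨hx.2, by omega⟩⟩
  · refine sum_finset_product_right _ _ _ fun x => ?_
    rw [mem_filter, mem_cells, mem_range, mem_Ico, ← mem_iff_lt_colLen]
    constructor
    · rintro ⟨hx, hc⟩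
      refine ⟨?_, by omega, hx⟩
      by_contra! hr
      exact h (μ.up_left_mem (by omega) hr hx)
    · rintro ⟨-, hc, hx⟩
      exact ⟨hx, by omega⟩

theorem YoungDiagram.rowLen_eq_of_mem_of_notMem {μ : YoungDiagram} {i j : ℕ} (h : (i, j) ∈ μ)
    (h' : (i, j + 1) ∉ μ) : μ.rowLen i = j + 1 := by
  rw [mem_iff_lt_rowLen] at h h'
  omega

theorem YoungDiagram.colLen_eq_of_mem_of_notMem {μ : YoungDiagram} {i j : ℕ} (h : (i, j) ∈ μ)
    (h' : (i + 1, j) ∉ μ) : μ.colLen j = i + 1 := by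
  rw [mem_iff_lt_colLen] at h h'
  omega

-- Mathlib's `YoungDiagram` reads a cell `(i, j)` as row `i`, column `j`; for `IsYoung` the first
-- coordinate is the column, so `rowLen a` below is the height of column `a` and `colLen b` the
-- length of row `b`.
def IsYoung.toYoungDiagram {ν : Finset (ℕ × ℕ)} (hν : IsYoung ν) : YoungDiagram where
  cells := ν
  isLowerSet _ _ hyx hx := hν _ _ _ _ hx hyx.1 hyx.2

section armLeg

variable {ν : Finset (ℕ × ℕ)}

lemma arm_eq_colLen_sub (hν : IsYoung ν) (x : ℕ × ℕ) :
    arm ν x = hν.toYoungDiagram.colLen x.2 - x.1 - 1 := by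
  have hrow : ν.filter (fun y => y.2 = x.2 ∧ x.1 < y.1) =
      Ioo x.1 (hν.toYoungDiagram.colLen x.2) ×ˢ {x.2} := by
    ext ⟨a, b⟩
    simp only [mem_filter, mem_product, mem_Ioo, mem_singleton]
    constructor
    · rintro ⟨hab, rfl, hlt⟩
      exact ⟨⟨hlt, YoungDiagram.mem_iff_lt_colLen (μ := hν.toYoungDiagram).mp hab⟩, rfl⟩
    · rintro ⟨⟨hlt, hab⟩, rfl⟩
      exact ⟨YoungDiagram.mem_iff_lt_colLen (μ := hν.toYoungDiagram).mpr hab, rfl, hlt⟩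
  rw [arm, hrow, card_product, Nat.card_Ioo, card_singleton, mul_one]

lemma leg_eq_rowLen_sub (hν : IsYoung ν) (x : ℕ × ℕ) :
    leg ν x = hν.toYoungDiagram.rowLen x.1 - x.2 - 1 := by
  have hcol : ν.filter (fun y => y.1 = x.1 ∧ x.2 < y.2) =
      {x.1} ×ˢ Ioo x.2 (hν.toYoungDiagram.rowLen x.1) := by
    ext ⟨a, b⟩
    simp only [mem_filter, mem_product, mem_Ioo, mem_singleton]
    constructor
    · rintro ⟨hab, rfl, hlt⟩
      exact ⟨rfl, hlt, YoungDiagram.mem_iff_lt_rowLen (μ := hν.toYoungDiagram).mp hab⟩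
    · rintro ⟨rfl, hlt, hab⟩
      exact ⟨YoungDiagram.mem_iff_lt_rowLen (μ := hν.toYoungDiagram).mpr hab, rfl, hlt⟩
  rw [leg, hcol, card_product, Nat.card_Ioo, card_singleton, one_mul]

lemma arm_erase_of_snd_ne {x z : ℕ × ℕ} (h : z.2 ≠ x.2) : arm (ν.erase z) x = arm ν x := by
  rw [arm, filter_erase, erase_eq_of_notMem (by simp [h]), arm]

lemma leg_erase_of_fst_ne {x z : ℕ × ℕ} (h : z.1 ≠ x.1) : leg (ν.erase z) x = leg ν x := by
  rw [leg, filter_erase, erase_eq_of_notMem (by simp [h]), leg]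

lemma arm_erase_add_one {x z : ℕ × ℕ} (hz : z ∈ ν) (h2 : z.2 = x.2) (h1 : x.1 < z.1) :
    arm (ν.erase z) x + 1 = arm ν x := by
  rw [arm, filter_erase, card_erase_add_one (mem_filter.mpr ⟨hz, h2, h1⟩), arm]

lemma leg_erase_add_one {x z : ℕ × ℕ} (hz : z ∈ ν) (h1 : z.1 = x.1) (h2 : x.2 < z.2) :
    leg (ν.erase z) x + 1 = leg ν x := by
  rw [leg, filter_erase, card_erase_add_one (mem_filter.mpr ⟨hz, h1, h2⟩), leg]

end armLeg

lemma sum_Ico_telescope_sub {A : Type*} [AddCommGroup A] (g : ℤ → A) (k : ℤ) {m n : ℕ}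
    (hmn : m ≤ n) :
    ∑ i ∈ Ico m n, (g (k - i + 1) - g (k - i)) = g (k + 1 - m) - g (k + 1 - n) := by
  rw [← neg_sub, ← sum_Ico_sub (fun i : ℕ => g (k + 1 - i)) hmn, ← sum_neg_distrib]
  refine sum_congr rfl fun i _ => ?_
  rw [neg_sub, Nat.cast_add, Nat.cast_one, add_sub_add_right_eq_sub, sub_add_eq_add_sub]

lemma quadr_eq_sub_snd (u v : ℤ) :
    quadr u v = (lmono (u + 1) (v + 1) - lmono u (v + 1)) - (lmono (u + 1) v - lmono u v) := by
  rw [quadr]; abel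

lemma quadr_eq_sub_fst (u v : ℤ) :
    quadr u v = (lmono (u + 1) (v + 1) - lmono (u + 1) v) - (lmono u (v + 1) - lmono u v) := by
  rw [quadr]; abel

lemma sum_range_quadr (u v : ℤ) (n : ℕ) :
    ∑ j ∈ range n, quadr u (v - j) =
      (lmono (u + 1) (v + 1) - lmono u (v + 1)) -
        (lmono (u + 1) (v + 1 - n) - lmono u (v + 1 - n)) := by
  simp_rw [quadr_eq_sub_snd, range_eq_Ico]
  rw [sum_Ico_telescope_sub (fun w => lmono (u + 1) w - lmono u w) v n.zero_le,
    Nat.cast_zero, sub_zero]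

lemma sum_Ico_quadr (k v : ℤ) {m n : ℕ} (hmn : m ≤ n) :
    ∑ i ∈ Ico m n, quadr (k - i) v =
      (lmono (k + 1 - m) (v + 1) - lmono (k + 1 - m) v) -
        (lmono (k + 1 - n) (v + 1) - lmono (k + 1 - n) v) := by
  simp_rw [quadr_eq_sub_fst]
  exact sum_Ico_telescope_sub (fun w => lmono w (v + 1) - lmono w v) k hmn

lemma lmono_sub_sum_quadr_erase_corner {ν : Finset (ℕ × ℕ)} (hν : IsYoung ν) {c r : ℕ}
    (hx : (c, r) ∈ ν) (hright : (c + 1, r) ∉ ν) (hup : (c, r + 1) ∉ ν) :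
    lmono ((c : ℤ) + 1) ((r : ℤ) + 1) -
        ∑ x ∈ ν.erase (c, r), quadr ((c : ℤ) - (x.1 : ℤ)) ((r : ℤ) - (x.2 : ℤ)) =
      lmono 1 1 +
        ∑ a ∈ range c,
          (lmono ((c : ℤ) - a + 1) ((r : ℤ) + 1 - hν.toYoungDiagram.rowLen a) -
            lmono ((c : ℤ) - a) ((r : ℤ) + 1 - hν.toYoungDiagram.rowLen a)) +
        ∑ b ∈ range r,
          (lmono ((c : ℤ) + 1 - hν.toYoungDiagram.colLen b) ((r : ℤ) - b + 1) -
            lmono ((c : ℤ) + 1 - hν.toYoungDiagram.colLen b) ((r : ℤ) - b)) := by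
  set Y := hν.toYoungDiagram
  have hHc : Y.rowLen c = r + 1 := Y.rowLen_eq_of_mem_of_notMem hx hup
  have hW : ∀ b ∈ range r, c + 1 ≤ Y.colLen b := fun b hb =>
    YoungDiagram.mem_iff_lt_colLen.mp (Y.up_left_mem le_rfl (mem_range.mp hb).le hx)
  have hsplit := Y.sum_cells_eq_sum_rows_add_sum_cols hright
    (fun x => quadr ((c : ℤ) - (x.1 : ℤ)) ((r : ℤ) - (x.2 : ℤ)))
  change ∑ x ∈ ν, _ = _ at hsplit
  rw [← add_sum_erase _ _ hx] at hsplit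
  have htopEdge : ∑ a ∈ range (c + 1),
      (lmono ((c : ℤ) - a + 1) ((r : ℤ) + 1) - lmono ((c : ℤ) - a) ((r : ℤ) + 1)) =
        lmono ((c : ℤ) + 1) ((r : ℤ) + 1) - lmono 0 ((r : ℤ) + 1) := by
    rw [range_eq_Ico, sum_Ico_telescope_sub (fun u => lmono u ((r : ℤ) + 1)) c (Nat.zero_le _)]
    simp
  have hrightEdge : ∑ b ∈ range r, (lmono 0 ((r : ℤ) - b + 1) - lmono 0 ((r : ℤ) - b)) =
      lmono 0 ((r : ℤ) + 1) - lmono 0 1 := by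
    rw [range_eq_Ico, sum_Ico_telescope_sub (lmono 0) r (Nat.zero_le _)]
    simp
  simp only [sum_range_quadr] at hsplit
  rw [sum_congr rfl fun b hb => sum_Ico_quadr _ _ (hW b hb)] at hsplit
  simp only [Nat.cast_add, Nat.cast_one, sub_self] at hsplit
  rw [sum_sub_distrib (s := range (c + 1)), sum_sub_distrib (s := range r), htopEdge, hrightEdge,
    sum_range_succ, hHc] at hsplit
  simp only [Nat.cast_add, Nat.cast_one, sub_self, zero_add] at hsplit
  rw [eq_sub_of_add_eq' hsplit, quadr, zero_add]
  abel

lemma notMem_of_isYoung_erase {ν : Finset (ℕ × ℕ)} {c r a b : ℕ}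
    (hμ : IsYoung (ν.erase (c, r))) (hab : (a, b) ≠ (c, r)) (ha : c ≤ a) (hb : r ≤ b) :
    (a, b) ∉ ν := fun h =>
  notMem_erase (c, r) ν (hμ a b c r (mem_erase.mpr ⟨hab, h⟩) ha hb)

section corner

variable {ν : Finset (ℕ × ℕ)} (hν : IsYoung ν) {c r : ℕ} (hx : (c, r) ∈ ν)
include hν hx

lemma prod_row_ratio_eq (hright : (c + 1, r) ∉ ν) :
    ∏ y ∈ ν.filter fun y => y.2 = r ∧ y.1 < c,
        (1 - monK (1 + (arm ν y : ℤ)) (-(leg ν y : ℤ))) /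
          (1 - monK (1 + (arm (ν.erase (c, r)) y : ℤ)) (-(leg (ν.erase (c, r)) y : ℤ))) =
      ∏ a ∈ range c,
        Omega0 (lmono ((c : ℤ) - a + 1) ((r : ℤ) + 1 - hν.toYoungDiagram.rowLen a) -
          lmono ((c : ℤ) - a) ((r : ℤ) + 1 - hν.toYoungDiagram.rowLen a)) := by
  set Y := hν.toYoungDiagram
  have hWr : Y.colLen r = c + 1 := Y.colLen_eq_of_mem_of_notMem hx hright
  rw [prod_finset_product_right _ {r} (fun _ => range c) fun y => ?_, prod_singleton]
  · refine prod_congr rfl fun a ha => ?_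
    have ha : a < c := mem_range.mp ha
    have hmem : (a, r) ∈ ν := hν c r a r hx ha.le le_rfl
    have harm : arm ν (a, r) = c - a := by rw [arm_eq_colLen_sub hν, hWr]; omega
    have harm' := arm_erase_add_one (x := (a, r)) hx rfl ha
    have hleg := leg_erase_of_fst_ne (ν := ν) (x := (a, r)) (z := (c, r)) ha.ne'
    have hleg' : leg ν (a, r) = Y.rowLen a - r - 1 := leg_eq_rowLen_sub hν (a, r)
    have hH : r < Y.rowLen a := YoungDiagram.mem_iff_lt_rowLen.mp hmem
    rw [Omega0_lmono_sub_lmono (by simp; omega) (by simp; omega), hleg]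
    congr 3 <;> omega
  · simp only [mem_filter, mem_singleton, mem_range]
    exact ⟨fun h => ⟨h.2.1, h.2.2⟩, fun h => ⟨hν c r y.1 y.2 hx h.2.le h.1.le, h⟩⟩

lemma prod_col_ratio_eq (hup : (c, r + 1) ∉ ν) :
    ∏ y ∈ ν.filter fun y => y.1 = c ∧ y.2 < r,
        (1 - monK (-(arm ν y : ℤ)) ((leg ν y : ℤ) + 1)) /
          (1 - monK (-(arm (ν.erase (c, r)) y : ℤ)) ((leg (ν.erase (c, r)) y : ℤ) + 1)) =
      ∏ b ∈ range r,
        Omega0 (lmono ((c : ℤ) + 1 - hν.toYoungDiagram.colLen b) ((r : ℤ) - b + 1) -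
          lmono ((c : ℤ) + 1 - hν.toYoungDiagram.colLen b) ((r : ℤ) - b)) := by
  set Y := hν.toYoungDiagram
  have hHc : Y.rowLen c = r + 1 := Y.rowLen_eq_of_mem_of_notMem hx hup
  rw [prod_finset_product _ {c} (fun _ => range r) fun y => ?_, prod_singleton]
  · refine prod_congr rfl fun b hb => ?_
    have hb : b < r := mem_range.mp hb
    have hmem : (c, b) ∈ ν := hν c r c b hx le_rfl hb.le
    have hleg : leg ν (c, b) = r - b := by rw [leg_eq_rowLen_sub hν, hHc]; omega
    have hleg' := leg_erase_add_one (x := (c, b)) hx rfl hb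
    have harm := arm_erase_of_snd_ne (ν := ν) (x := (c, b)) (z := (c, r)) hb.ne'
    have harm' : arm ν (c, b) = Y.colLen b - c - 1 := arm_eq_colLen_sub hν (c, b)
    have hW : c < Y.colLen b := YoungDiagram.mem_iff_lt_colLen.mp hmem
    rw [Omega0_lmono_sub_lmono (by simp; omega) (by simp; omega), harm]
    congr 3 <;> omega
  · simp only [mem_filter, mem_singleton, mem_range]
    exact ⟨fun h => ⟨h.2.1, h.2.2⟩, fun h => ⟨hν c r y.1 y.2 hx h.1.le h.2.le, h⟩⟩

end corner

theorem statement1 (ν : Finset (ℕ × ℕ)) (c r : ℕ) (hν : IsYoung ν)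
    (hx : (c, r) ∈ ν) (hμ : IsYoung (ν.erase (c, r))) :
    (1 - q * t) *
        (∏ y ∈ ν.filter fun y => y.2 = r ∧ y.1 < c,
          (1 - monK (1 + (arm ν y : ℤ)) (-(leg ν y : ℤ))) /
            (1 - monK (1 + (arm (ν.erase (c, r)) y : ℤ)) (-(leg (ν.erase (c, r)) y : ℤ)))) *
        (∏ y ∈ ν.filter fun y => y.1 = c ∧ y.2 < r,
          (1 - monK (-(arm ν y : ℤ)) ((leg ν y : ℤ) + 1)) /
            (1 - monK (-(arm (ν.erase (c, r)) y : ℤ)) ((leg (ν.erase (c, r)) y : ℤ) + 1))) =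
      Omega0 (lmono ((c : ℤ) + 1) ((r : ℤ) + 1) -
        ∑ x ∈ ν.erase (c, r), quadr ((c : ℤ) - (x.1 : ℤ)) ((r : ℤ) - (x.2 : ℤ))) := by
  have hright : (c + 1, r) ∉ ν := notMem_of_isYoung_erase hμ (by simp) (Nat.le_succ c) le_rfl
  have hup : (c, r + 1) ∉ ν := notMem_of_isYoung_erase hμ (by simp) le_rfl (Nat.le_succ r)
  rw [lmono_sub_sum_quadr_erase_corner hν hx hright hup, Omega0_add, Omega0_add, Omega0_sum,
    Omega0_sum, Omega0_lmono (by simp), prod_row_ratio_eq hν hx hright,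
    prod_col_ratio_eq hν hx hup]
  simp [monK]

end
end

section
/- Fix n ≥ 1 and let J ∈ Mat_n(ℂ) be the regular nilpotent Jordan block (ones on the superdiagonal, zeros elsewhere). Let Z := { g ∈ SL_n(ℂ) : gJ = Jg } be the centralizer of J in SL_n(ℂ), a topological group with the subspace topology. Then the quotient of Z by the connected component of its identity element is a group isomorphic to ℤ/nℤ. -/
noncomputable section

/-- The regular nilpotent Jordan block: ones on the superdiagonal. -/
def Jmat (n : ℕ) : Matrix (Fin n) (Fin n) ℂ :=
  Matrix.of fun i j => if (i : ℕ) + 1 = (j : ℕ) then 1 else 0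

instance (n : ℕ) : TopologicalSpace (Matrix.SpecialLinearGroup (Fin n) ℂ) :=
  instTopologicalSpaceSubtype

/-- The centralizer of the Jordan block `J` inside `SL_n(ℂ)`. -/
def Zcent (n : ℕ) : Subgroup (Matrix.SpecialLinearGroup (Fin n) ℂ) where
  carrier := { g | (g : Matrix (Fin n) (Fin n) ℂ) * Jmat n =
    Jmat n * (g : Matrix (Fin n) (Fin n) ℂ) }
  one_mem' := by
    simp [Matrix.SpecialLinearGroup.coe_one]
  mul_mem' := by
    intro a b ha hb
    simp only [Set.mem_setOf_eq, Matrix.SpecialLinearGroup.coe_mul] at *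
    rw [mul_assoc, hb, ← mul_assoc, ha, mul_assoc]
  inv_mem' := by
    intro a ha
    simp only [Set.mem_setOf_eq] at *
    have h1 : ((a⁻¹ : Matrix.SpecialLinearGroup (Fin n) ℂ) : Matrix (Fin n) (Fin n) ℂ) *
        (a : Matrix (Fin n) (Fin n) ℂ) = 1 := by
      rw [← Matrix.SpecialLinearGroup.coe_mul, inv_mul_cancel,
        Matrix.SpecialLinearGroup.coe_one]
    have h2 : (a : Matrix (Fin n) (Fin n) ℂ) *
        ((a⁻¹ : Matrix.SpecialLinearGroup (Fin n) ℂ) : Matrix (Fin n) (Fin n) ℂ) = 1 := by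
      rw [← Matrix.SpecialLinearGroup.coe_mul, mul_inv_cancel,
        Matrix.SpecialLinearGroup.coe_one]
    set A : Matrix (Fin n) (Fin n) ℂ := (a : Matrix (Fin n) (Fin n) ℂ)
    set B : Matrix (Fin n) (Fin n) ℂ :=
      ((a⁻¹ : Matrix.SpecialLinearGroup (Fin n) ℂ) : Matrix (Fin n) (Fin n) ℂ)
    calc B * Jmat n = B * Jmat n * (A * B) := by rw [h2, mul_one]
      _ = B * (Jmat n * A) * B := by simp only [mul_assoc]
      _ = B * (A * Jmat n) * B := by rw [ha]
      _ = Jmat n * B := by rw [← mul_assoc B A (Jmat n), h1, one_mul]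

/-!
A matrix commuting with the regular nilpotent `J` is upper triangular with constant diagonal `a`,
so its determinant is `a ^ n`. On the centralizer `Z` of `J` in `SL_n(ℂ)`, `g ↦ a` is thus a
continuous homomorphism onto the `n`-th roots of unity (the scalar matrices `ζ • 1` hit every
root), a cyclic group of order `n`. Its image is discrete, so the identity component lies in the
kernel; conversely an element `g` of the kernel is joined to `1` by the segment `1 + t • (g - 1)`,
which stays in `Z` because its diagonal stays equal to `1`.
-/

namespace Jmat

-- Sizes are written `m + 1` so that indices split along `0`, `Fin.succ` and `Fin.castSucc`.
variable {m : ℕ}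

lemma apply_succ (i : Fin (m + 1)) (j : Fin m) :
    Jmat (m + 1) i j.succ = if i = j.castSucc then 1 else 0 := by
  simp [Jmat, Fin.ext_iff]

lemma apply_castSucc (i : Fin m) (j : Fin (m + 1)) :
    Jmat (m + 1) i.castSucc j = if i.succ = j then 1 else 0 := by
  simp [Jmat, Fin.ext_iff]

@[simp]
lemma apply_zero (i : Fin (m + 1)) : Jmat (m + 1) i 0 = 0 := by
  simp [Jmat]

variable {A B : Matrix (Fin (m + 1)) (Fin (m + 1)) ℂ}

lemma apply_succ_succ_of_commute (hA : Commute A (Jmat (m + 1))) (i j : Fin m) :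
    A i.succ j.succ = A i.castSucc j.castSucc := by
  have h := congr_fun₂ hA.eq i.castSucc j.succ
  simpa [Matrix.mul_apply, apply_succ, apply_castSucc] using h.symm

lemma apply_succ_zero_of_commute (hA : Commute A (Jmat (m + 1))) (i : Fin m) :
    A i.succ 0 = 0 := by
  have h := congr_fun₂ hA.eq i.castSucc 0
  simpa [Matrix.mul_apply, apply_castSucc] using h.symm

lemma isUpperTriangular_of_commute (hA : Commute A (Jmat (m + 1))) : A.IsUpperTriangular := by
  intro i j hji
  induction j using Fin.induction generalizing i with
  | zero =>
    obtain ⟨i, rfl⟩ := Fin.exists_succ_eq.2 (ne_of_gt hji)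
    exact apply_succ_zero_of_commute hA i
  | succ j ih =>
    obtain ⟨i, rfl⟩ := Fin.exists_succ_eq.2 (ne_of_gt (lt_trans (Fin.succ_pos j) hji))
    rw [apply_succ_succ_of_commute hA]
    exact ih (Fin.castSucc_lt_castSucc_iff.2 (Fin.succ_lt_succ_iff.1 hji))

lemma apply_self_of_commute (hA : Commute A (Jmat (m + 1))) (i : Fin (m + 1)) :
    A i i = A 0 0 := by
  induction i using Fin.induction with
  | zero => rfl
  | succ i ih => rw [apply_succ_succ_of_commute hA, ih]

lemma det_of_commute (hA : Commute A (Jmat (m + 1))) : A.det = A 0 0 ^ (m + 1) := by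
  simp [Matrix.det_of_isUpperTriangular (isUpperTriangular_of_commute hA),
    apply_self_of_commute hA]

lemma mul_apply_zero_zero_of_commute (hB : Commute B (Jmat (m + 1))) :
    (A * B) 0 0 = A 0 0 * B 0 0 := by
  simp [Matrix.mul_apply, Fin.sum_univ_succ, apply_succ_zero_of_commute hB]

end Jmat

namespace Zcent

open Matrix

variable {m : ℕ}

lemma commute_coe (g : Zcent (m + 1)) :
    Commute ((g : SpecialLinearGroup (Fin (m + 1)) ℂ) : Matrix (Fin (m + 1)) (Fin (m + 1)) ℂ)
      (Jmat (m + 1)) :=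
  g.2

def ofCommute (M : Matrix (Fin (m + 1)) (Fin (m + 1)) ℂ) (hM : Commute M (Jmat (m + 1)))
    (h : M 0 0 ^ (m + 1) = 1) : Zcent (m + 1) :=
  ⟨⟨M, by rw [Jmat.det_of_commute hM, h]⟩, hM⟩

def corner : Zcent (m + 1) →* ℂ where
  toFun g := (g : SpecialLinearGroup (Fin (m + 1)) ℂ) 0 0
  map_one' := by simp
  map_mul' g h := Jmat.mul_apply_zero_zero_of_commute (commute_coe h)

@[simp]
lemma corner_ofCommute (M : Matrix (Fin (m + 1)) (Fin (m + 1)) ℂ)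
    (hM : Commute M (Jmat (m + 1))) (h : M 0 0 ^ (m + 1) = 1) :
    corner (ofCommute M hM h) = M 0 0 :=
  rfl

lemma corner_pow_eq_one (g : Zcent (m + 1)) : corner g ^ (m + 1) = 1 := by
  rw [corner, MonoidHom.coe_mk, OneHom.coe_mk, ← Jmat.det_of_commute (commute_coe g)]
  exact (g : SpecialLinearGroup (Fin (m + 1)) ℂ).2

lemma continuous_corner : Continuous (corner : Zcent (m + 1) → ℂ) :=
  (continuous_subtype_val.comp (X := Zcent (m + 1)) continuous_subtype_val).matrix_elem 0 0

lemma corner_eq_one_of_mem_connectedComponent {g : Zcent (m + 1)}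
    (hg : g ∈ connectedComponent 1) : corner g = 1 := by
  have hroots : Set.MapsTo corner (connectedComponent 1)
      (Polynomial.nthRootsFinset (m + 1) (1 : ℂ)) := fun g _ =>
    (Polynomial.mem_nthRootsFinset m.succ_pos 1).2 (corner_pow_eq_one g)
  simpa using isPreconnected_connectedComponent.constant_of_mapsTo
    (Set.toFinite _).isDiscrete continuous_corner.continuousOn hroots hg mem_connectedComponent

lemma mem_connectedComponent_of_corner_eq_one {g : Zcent (m + 1)} (hg : corner g = 1) :
    g ∈ connectedComponent 1 := by
  set A := ((g : SpecialLinearGroup (Fin (m + 1)) ℂ) : Matrix (Fin (m + 1)) (Fin (m + 1)) ℂ)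
  have hA : ∀ t : ℂ, Commute (1 + t • (A - 1)) (Jmat (m + 1)) := fun t =>
    (Commute.one_left _).add_left (((commute_coe g).sub_left (Commute.one_left _)).smul_left t)
  have hA00 : ∀ t : ℂ, (1 + t • (A - 1)) 0 0 = 1 := fun t => by
    simp [show A 0 0 = 1 from hg]
  let F : ℂ → Zcent (m + 1) := fun t => ofCommute _ (hA t) (by rw [hA00, one_pow])
  have hF : Continuous F := by
    refine Continuous.subtype_mk (Continuous.subtype_mk ?_ _) _
    fun_prop
  have hF0 : F 0 = 1 := by ext : 2; simp [F, ofCommute]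
  have hF1 : F 1 = g := by ext : 2; simp [F, ofCommute, A]
  exact (isPreconnected_range hF).subset_connectedComponent ⟨0, hF0⟩ ⟨1, hF1⟩

lemma corner_eq_one_iff_mem_connectedComponent (g : Zcent (m + 1)) :
    corner g = 1 ↔ g ∈ connectedComponent 1 :=
  ⟨mem_connectedComponent_of_corner_eq_one, corner_eq_one_of_mem_connectedComponent⟩

def cornerRoot : Zcent (m + 1) →* rootsOfUnity (m + 1) ℂ :=
  corner.toHomUnits.codRestrict _ fun g => (mem_rootsOfUnity' _ _).2 (corner_pow_eq_one g)

lemma cornerRoot_surjective : Function.Surjective (cornerRoot (m := m)) := by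
  intro ζ
  have hζ : ((ζ : ℂˣ) : ℂ) ^ (m + 1) = 1 := (mem_rootsOfUnity' _ _).1 ζ.2
  refine ⟨ofCommute (((ζ : ℂˣ) : ℂ) • 1) ((Commute.one_left _).smul_left _) ?_, ?_⟩
  · simpa using hζ
  · ext
    simp [cornerRoot]

lemma cornerRoot_eq_one_iff (g : Zcent (m + 1)) :
    cornerRoot g = 1 ↔ g ∈ connectedComponent 1 := by
  rw [← corner_eq_one_iff_mem_connectedComponent]
  simp [cornerRoot, Subtype.ext_iff, Units.ext_iff]

end Zcent

/-- The component group of the centralizer of a regular nilpotent in `SL_n(ℂ)` is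
`ℤ/nℤ`: there is a surjective homomorphism to `ℤ/nℤ` whose kernel is exactly the
connected component of the identity, i.e. the quotient of `Z` by its identity
component is isomorphic to `ℤ/nℤ`. -/
theorem statement8 (n : ℕ) (hn : 1 ≤ n) :
    ∃ φ : Zcent n →* Multiplicative (ZMod n),
      Function.Surjective φ ∧
        ∀ g : Zcent n, φ g = 1 ↔ g ∈ connectedComponent (1 : Zcent n) := by
  obtain ⟨m, rfl⟩ := Nat.exists_eq_add_of_le' hn
  let e : rootsOfUnity (m + 1) ℂ ≃* Multiplicative (ZMod (m + 1)) :=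
    mulEquivOfCyclicCardEq (by rw [Complex.card_rootsOfUnity]; simp)
  refine ⟨e.toMonoidHom.comp Zcent.cornerRoot, e.surjective.comp Zcent.cornerRoot_surjective,
    fun g => ?_⟩
  simpa using Zcent.cornerRoot_eq_one_iff g

end
end

section
/- Fix n ≥ 1. For an n×n complex matrix x and v ∈ ℂⁿ, let s(x,v) := det M(x,v), where M(x,v) is the n×n matrix whose j-th column is x^{j−1}v for j = 1, …, n. If x is strictly upper triangular (x_{ij} = 0 whenever i ≥ j), then s(x,v) = (−1)^{n(n−1)/2} · v_n^n · ∏_{i=1}^{n−1} x_{i,i+1}^{\,i}, where v_n is the last coordinate of v and x_{i,i+1} are the superdiagonal entries of x. In particular, s(x,v) depends only on v_n and the superdiagonal entries of x. -/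
/-!
Let `K` be the Krylov matrix whose `j`-th column is `xʲ v`. Since `x` is strictly upper
triangular, `(xᵏ)ᵢⱼ` vanishes for `j < i + k` and equals the product of the superdiagonal
entries `x_{s,s+1}`, `i ≤ s < j`, for `j = i + k`. Hence `Kᵢⱼ = 0` below the antidiagonal
(`i + j ≥ n`), while the antidiagonal entry `K_{i,n-1-i}` is `vₙ ∏_{i ≤ s < n-1} x_{s,s+1}`.
The determinant of such a matrix is `(-1)^{n(n-1)/2}` times its antidiagonal product, and
collecting the factor `x_{s,s+1}` over the `s + 1` rows `i ≤ s` gives the formula.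
-/

/-- `s(x,v)`: the determinant of the matrix whose `j`-th column is `x^{j-1} v`. -/
noncomputable def sFun (n : ℕ) (x : Matrix (Fin n) (Fin n) ℂ) (v : Fin n → ℂ) : ℂ :=
  Matrix.det (Matrix.of fun i j : Fin n => (x ^ (j : ℕ)).mulVec v i)

open Finset

namespace Matrix

variable {R : Type*} {n : ℕ}

theorem det_eq_prod_rev_of_apply_eq_zero [CommRing R] :
    ∀ {n : ℕ} (M : Matrix (Fin n) (Fin n) R), (∀ i j : Fin n, n ≤ (i : ℕ) + j → M i j = 0) →
      M.det = (-1) ^ (∑ k ∈ range n, k) * ∏ i, M i i.rev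
  | 0, M, _ => by simp
  | m + 1, M, hM => by
    have hlast : ∀ j : Fin (m + 1), j ≠ 0 → M (Fin.last m) j = 0 := fun j hj =>
      hM _ _ (by simpa [Nat.one_le_iff_ne_zero] using Fin.val_ne_iff.mpr hj)
    have hminor := det_eq_prod_rev_of_apply_eq_zero (M.submatrix Fin.castSucc Fin.succ)
      fun i j hij => hM _ _ (by simp; omega)
    rw [det_succ_row M (Fin.last m), sum_eq_single 0 (fun j _ hj => by simp [hlast j hj])
      (by simp), Fin.succAbove_last, Fin.succAbove_zero, hminor, Fin.prod_univ_castSucc,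
      sum_range_succ, pow_add]
    simp only [submatrix_apply, ← Fin.rev_castSucc, Fin.rev_last, Fin.val_last, Fin.val_zero]
    ring

def superdiag [Zero R] (x : Matrix (Fin n) (Fin n) R) (s : ℕ) : R :=
  if h : s + 1 < n then x ⟨s, by omega⟩ ⟨s + 1, h⟩ else 0

theorem superdiag_of_lt [Zero R] (x : Matrix (Fin n) (Fin n) R) {s : ℕ} (h : s + 1 < n) :
    superdiag x s = x ⟨s, by omega⟩ ⟨s + 1, h⟩ :=
  dif_pos h

theorem pow_apply_eq_zero_of_lt_add [Semiring R] {x : Matrix (Fin n) (Fin n) R}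
    (hx : ∀ i j : Fin n, j ≤ i → x i j = 0) :
    ∀ (k : ℕ) {i j : Fin n}, (j : ℕ) < i + k → (x ^ k) i j = 0
  | 0, i, j, h => one_apply_ne (by omega)
  | k + 1, i, j, h => by
    rw [pow_succ, mul_apply]
    refine sum_eq_zero fun l _ => ?_
    rcases lt_or_ge (l : ℕ) (i + k) with hl | hl
    · rw [pow_apply_eq_zero_of_lt_add hx k hl, zero_mul]
    · rw [hx l j (by rw [Fin.le_def]; omega), mul_zero]

theorem pow_apply_eq_prod_superdiag [CommSemiring R] {x : Matrix (Fin n) (Fin n) R}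
    (hx : ∀ i j : Fin n, j ≤ i → x i j = 0) :
    ∀ (k : ℕ) {i j : Fin n}, (j : ℕ) = i + k → (x ^ k) i j = ∏ s ∈ Ico (i : ℕ) j, superdiag x s
  | 0, i, j, h => by
    rw [Fin.ext (by omega : (j : ℕ) = i), pow_zero, one_apply_eq, Ico_self, prod_empty]
  | k + 1, i, j, h => by
    have hj := j.isLt
    rw [pow_succ, mul_apply, sum_eq_single ⟨i + k, by omega⟩,
      pow_apply_eq_prod_superdiag hx k rfl, h, ← add_assoc, prod_Ico_succ_top (by omega),
      superdiag_of_lt x (by omega)]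
    · exact congrArg (_ * x _ ·) (Fin.ext h)
    · intro l _ hl
      rcases lt_or_ge (l : ℕ) (i + k) with hlt | hge
      · rw [pow_apply_eq_zero_of_lt_add hx k hlt, zero_mul]
      · rw [hx l j (by rw [Fin.le_def]; have : (l : ℕ) ≠ i + k := Fin.val_ne_iff.mpr hl; omega),
          mul_zero]
    · simp

def krylov [Semiring R] (x : Matrix (Fin n) (Fin n) R) (v : Fin n → R) :
    Matrix (Fin n) (Fin n) R :=
  of fun i j => (x ^ (j : ℕ) *ᵥ v) i

theorem krylov_apply [Semiring R] (x : Matrix (Fin n) (Fin n) R) (v : Fin n → R) (i j : Fin n) :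
    krylov x v i j = ∑ l, (x ^ (j : ℕ)) i l * v l :=
  rfl

theorem krylov_apply_eq_zero [Semiring R] {x : Matrix (Fin n) (Fin n) R}
    (hx : ∀ i j : Fin n, j ≤ i → x i j = 0) (v : Fin n → R) {i j : Fin n}
    (hij : n ≤ (i : ℕ) + j) : krylov x v i j = 0 :=
  (krylov_apply x v i j).trans <| sum_eq_zero fun l _ => by
    rw [pow_apply_eq_zero_of_lt_add hx _ (by omega), zero_mul]

theorem krylov_apply_rev [CommSemiring R] {m : ℕ} {x : Matrix (Fin (m + 1)) (Fin (m + 1)) R}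
    (hx : ∀ i j : Fin (m + 1), j ≤ i → x i j = 0) (v : Fin (m + 1) → R) (i : Fin (m + 1)) :
    krylov x v i i.rev = (∏ s ∈ Ico (i : ℕ) m, superdiag x s) * v (Fin.last m) := by
  rw [krylov_apply]
  refine (sum_eq_single (Fin.last m) (fun l _ hl => ?_) (by simp)).trans ?_
  · have : (l : ℕ) ≠ m := Fin.val_ne_iff.mpr hl
    rw [pow_apply_eq_zero_of_lt_add hx _ (by rw [Fin.val_rev]; omega), zero_mul]
  · rw [pow_apply_eq_prod_superdiag hx _ (by simp; omega), Fin.val_last]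

end Matrix

theorem Finset.prod_range_prod_Ico {M : Type*} [CommMonoid M] (g : ℕ → M) (m : ℕ) :
    ∏ i ∈ range (m + 1), ∏ s ∈ Ico i m, g s = ∏ s ∈ range m, g s ^ (s + 1) := by
  rw [prod_comm' (t' := range m) (s' := fun s => range (s + 1)) (by simp; omega)]
  simp

/-- For a strictly upper triangular `x`,
`s(x,v) = (-1)^{n(n-1)/2} vₙⁿ ∏_{i=1}^{n-1} x_{i,i+1}ⁱ`. -/
theorem statement10 (n : ℕ) (hn : 1 ≤ n) (x : Matrix (Fin n) (Fin n) ℂ)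
    (v : Fin n → ℂ) (hx : ∀ i j : Fin n, j ≤ i → x i j = 0) :
    sFun n x v =
      (-1 : ℂ) ^ (n * (n - 1) / 2) * v ⟨n - 1, by omega⟩ ^ n *
        ∏ i : Fin (n - 1),
          x ⟨(i : ℕ), by have := i.isLt; omega⟩ ⟨(i : ℕ) + 1, by have := i.isLt; omega⟩ ^
            ((i : ℕ) + 1) := by
  obtain ⟨m, rfl⟩ : ∃ m, n = m + 1 := ⟨n - 1, by omega⟩
  have hdet : sFun (m + 1) x v = (-1) ^ ((m + 1) * m / 2) * ∏ i, Matrix.krylov x v i i.rev := by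
    show (Matrix.krylov x v).det = _
    rw [show (m + 1) * m / 2 = ∑ k ∈ range (m + 1), k by rw [sum_range_id, Nat.add_sub_cancel]]
    exact Matrix.det_eq_prod_rev_of_apply_eq_zero _ fun i j => Matrix.krylov_apply_eq_zero hx v
  have hsuperdiag : ∀ i : Fin m, x ⟨i, by omega⟩ ⟨i + 1, by omega⟩ = Matrix.superdiag x i :=
    fun i => (Matrix.superdiag_of_lt x (by omega)).symm
  simp only [hdet, Matrix.krylov_apply_rev hx, prod_mul_distrib, prod_const, card_univ,
    Fintype.card_fin, Nat.add_sub_cancel, hsuperdiag]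
  rw [Fin.prod_univ_eq_prod_range (fun i => ∏ s ∈ Ico i m, Matrix.superdiag x s),
    prod_range_prod_Ico, Fin.prod_univ_eq_prod_range (fun s => Matrix.superdiag x s ^ (s + 1))]
  simp only [Nat.add_sub_cancel, Fin.last]
  ring
end
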